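/- For the Jordan block T of size n with unitary eigenvalue λ (|λ| = 1), the normalized powers satisfy: for v = Σ α_j v_j with k = max{j : α_j ≠ 0} − 1, the first coordinate of C(m,k)^{-1} T^m(v) stays bounded away from 0 and all other coordinates tend to 0 relative to it; in particular the sequence [C(m,k)^{-1} T^m(v)] in projective space converges to the point [v_1]. -/

import Mathlib

/-!
Write the Jordan block as `λ • 1 + N` with `N` the nilpotent shift `(N w)ᵢ = wᵢ₊₁` (indices
from `0`, entries past the end read as `0`). Since the two summands commute, the binomial theorem
gives `(Tᵐ v)ᵢ = ∑ᵣ C(m,r) λ^(m-r) v_{i+r}`, in which only the terms with `i + r ≤ k` survive.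
After division by `λ^(m-k) C(m,k)` the term `i = 0, r = k` is `v_k`, and every other term is a
constant multiple of `C(m,r)/C(m,k)` with `r < k`, which tends to `0` because `C(m,r) = Θ(mʳ)`.
So the normalized vectors converge to `v_k` times the first basis vector, and their classes
converge in projective space because `v ↦ [v]` is continuous on nonzero vectors.
-/

open Filter
open scoped LinearAlgebra.Projectivization

noncomputable instance {n : ℕ} : TopologicalSpace (ℙ ℂ (Fin n → ℂ)) :=
  inferInstanceAs (TopologicalSpace (Quotient _))

open Topology Finset Asymptotics Matrix

def extendByZero {R : Type*} [Zero R] {n : ℕ} (v : Fin n → R) (j : ℕ) : R :=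
  if h : j < n then v ⟨j, h⟩ else 0

lemma extendByZero_val {R : Type*} [Zero R] {n : ℕ} (v : Fin n → R) (i : Fin n) :
    extendByZero v i = v i := dif_pos i.isLt

lemma extendByZero_eq_zero_of_lt {R : Type*} [Zero R] {n : ℕ} {v : Fin n → R} {k : Fin n}
    (hmax : ∀ i : Fin n, k < i → v i = 0) {j : ℕ} (hj : (k : ℕ) < j) : extendByZero v j = 0 := by
  unfold extendByZero
  split_ifs with h
  · exact hmax _ hj
  · rfl

def Matrix.upperShift (n : ℕ) (R : Type*) [Zero R] [One R] : Matrix (Fin n) (Fin n) R :=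
  fun i j => if (j : ℕ) = i + 1 then 1 else 0

def Matrix.jordanBlock {R : Type*} [Semiring R] (n : ℕ) (lam : R) : Matrix (Fin n) (Fin n) R :=
  lam • 1 + upperShift n R

section

variable {R : Type*} [CommSemiring R] {n : ℕ}

lemma Matrix.jordanBlock_apply (lam : R) (i j : Fin n) :
    jordanBlock n lam i j =
      if (j : ℕ) = (i : ℕ) then lam else if (j : ℕ) = (i : ℕ) + 1 then 1 else 0 := by
  simp only [jordanBlock, upperShift, Matrix.add_apply, Matrix.smul_apply, one_apply, Fin.ext_iff,
    smul_eq_mul]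
  split_ifs <;> first | omega | simp

lemma Matrix.upperShift_mulVec_apply (w : Fin n → R) (i : Fin n) :
    (upperShift n R *ᵥ w) i = extendByZero w (i + 1) := by
  simp only [mulVec, dotProduct, upperShift, ite_mul, one_mul, zero_mul, extendByZero]
  split_ifs with h
  · rw [sum_eq_single_of_mem ⟨i + 1, h⟩ (mem_univ _)]
    · simp
    · exact fun j _ hj => if_neg fun hj' => hj (Fin.ext hj')
  · exact sum_eq_zero fun j _ => if_neg (by omega)

lemma extendByZero_upperShift_mulVec (w : Fin n → R) (j : ℕ) :
    extendByZero (upperShift n R *ᵥ w) j = extendByZero w (j + 1) := by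
  by_cases hj : j < n
  · simp [extendByZero, hj, upperShift_mulVec_apply]
  · simp [extendByZero, hj, show ¬ j + 1 < n by omega]

lemma extendByZero_upperShift_pow_mulVec (w : Fin n → R) (r j : ℕ) :
    extendByZero (upperShift n R ^ r *ᵥ w) j = extendByZero w (j + r) := by
  induction r generalizing j with
  | zero => simp
  | succ r ih =>
    rw [pow_succ', ← mulVec_mulVec, extendByZero_upperShift_mulVec, ih, add_right_comm,
      add_assoc]

lemma Matrix.jordanBlock_pow_mulVec_apply (lam : R) (v : Fin n → R) (m : ℕ) (i : Fin n) :
    (jordanBlock n lam ^ m *ᵥ v) i =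
      ∑ r ∈ range (m + 1), m.choose r * lam ^ (m - r) * extendByZero v (i + r) := by
  rw [jordanBlock, add_comm, (Commute.smul_right (Commute.one_right _) lam).add_pow, sum_mulVec,
    Finset.sum_apply]
  refine sum_congr rfl fun r _ => ?_
  rw [smul_pow, one_pow, mul_smul_comm, mul_one, ← Nat.cast_comm, ← nsmul_eq_mul, smul_mulVec,
    smul_mulVec, Pi.smul_apply, Pi.smul_apply, ← extendByZero_val (upperShift n R ^ r *ᵥ v),
    extendByZero_upperShift_pow_mulVec, nsmul_eq_mul, smul_eq_mul, mul_assoc]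

end

theorem tendsto_choose_div_choose_of_lt {r k : ℕ} (h : r < k) :
    Tendsto (fun m : ℕ => (m.choose r : ℝ) / m.choose k) atTop (𝓝 0) :=
  ((isTheta_choose r).trans_isLittleO <|
    ((isLittleO_pow_pow_atTop_of_lt h).comp_tendsto tendsto_natCast_atTop_atTop).trans_isTheta
      (isTheta_choose k).symm).tendsto_div_nhds_zero

theorem tendsto_inv_mul_sum_choose_mul_pow {lam : ℂ} (hlam : lam ≠ 0) {V : ℕ → ℂ} {k : ℕ}
    (hV : ∀ j, k < j → V j = 0) :
    Tendsto (fun m : ℕ => (lam ^ (m - k) * m.choose k)⁻¹ *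
      ∑ r ∈ range (m + 1), m.choose r * lam ^ (m - r) * V r) atTop (𝓝 (V k)) := by
  have hsplit : ∀ m, k ≤ m → (lam ^ (m - k) * m.choose k)⁻¹ *
      ∑ r ∈ range (m + 1), m.choose r * lam ^ (m - r) * V r =
      V k + ∑ r ∈ range k, ((m.choose r / m.choose k : ℝ) : ℂ) * (lam ^ (k - r) * V r) := by
    intro m hm
    have hC : (m.choose k : ℂ) ≠ 0 := Nat.cast_ne_zero.2 (Nat.choose_pos hm).ne'
    rw [← sum_subset (range_subset_range.2 (by omega : k + 1 ≤ m + 1)) fun r _ hr => by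
      rw [hV r (by simp at hr; omega), mul_zero], sum_range_succ, mul_add, add_comm, mul_sum]
    congr 1
    · field_simp
    · refine sum_congr rfl fun r hr => ?_
      have hpow : lam ^ (m - r) = lam ^ (m - k) * lam ^ (k - r) := by
        rw [← pow_add]; congr 1; simp at hr; omega
      push_cast
      rw [hpow]
      field_simp
  have hterms : Tendsto (fun m : ℕ =>
      ∑ r ∈ range k, ((m.choose r / m.choose k : ℝ) : ℂ) * (lam ^ (k - r) * V r)) atTop (𝓝 0) := by
    simpa using tendsto_finsetSum _ fun r hr =>
      ((Complex.continuous_ofReal.tendsto 0).comp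
        (tendsto_choose_div_choose_of_lt (mem_range.1 hr))).mul_const (lam ^ (k - r) * V r)
  simpa using (hterms.const_add (V k)).congr' <|
    (eventually_ge_atTop k).mono fun m hm => (hsplit m hm).symm

theorem Matrix.tendsto_jordanBlock_pow_mulVec {n : ℕ} (hn : 0 < n) {lam : ℂ} (hlam : lam ≠ 0)
    {v : Fin n → ℂ} {k : Fin n} (hmax : ∀ i : Fin n, k < i → v i = 0) :
    Tendsto (fun m : ℕ => (lam ^ (m - (k : ℕ)) * m.choose k)⁻¹ • (jordanBlock n lam ^ m *ᵥ v))
      atTop (𝓝 (Pi.single ⟨0, hn⟩ (v k))) := by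
  refine tendsto_pi_nhds.2 fun i => ?_
  convert tendsto_inv_mul_sum_choose_mul_pow hlam (k := k)
    (V := fun j => extendByZero v (i + j)) (fun j hj => extendByZero_eq_zero_of_lt hmax (by omega))
    using 2 with m
  · simp only [Pi.smul_apply, smul_eq_mul, jordanBlock_pow_mulVec_apply]
  · by_cases hi : i = ⟨0, hn⟩
    · subst hi
      simp [← extendByZero_val v k]
    · rw [Pi.single_eq_of_ne hi, extendByZero_eq_zero_of_lt hmax]
      exact Nat.lt_add_of_pos_left (Nat.pos_of_ne_zero fun h => hi (Fin.ext h))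

theorem Projectivization.tendsto_mk_of_tendsto_smul {ι : Type*} {l : Filter ι} {n : ℕ}
    {x : ι → Fin n → ℂ} (hx : ∀ i, x i ≠ 0) {c : ι → ℂ} (hc : ∀ᶠ i in l, c i ≠ 0)
    {y : Fin n → ℂ} (hy : y ≠ 0) (h : Tendsto (fun i => c i • x i) l (𝓝 y)) :
    Tendsto (fun i => mk ℂ (x i) (hx i)) l (𝓝 (mk ℂ y hy)) := by
  let W : ι → {w : Fin n → ℂ // w ≠ 0} := fun i =>
    if hi : c i ≠ 0 then ⟨c i • x i, smul_ne_zero hi (hx i)⟩ else ⟨y, hy⟩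
  have hW : Tendsto W l (𝓝 ⟨y, hy⟩) := by
    rw [tendsto_subtype_rng]
    refine h.congr' ?_
    filter_upwards [hc] with i hi
    simp [W, hi]
  have hmk : Continuous (mk' ℂ : {w : Fin n → ℂ // w ≠ 0} → ℙ ℂ (Fin n → ℂ)) :=
    continuous_coinduced_rng
  refine ((hmk.tendsto _).comp hW).congr' ?_
  filter_upwards [hc] with i hi
  rw [Function.comp_apply, show W i = ⟨c i • x i, smul_ne_zero hi (hx i)⟩ from dif_pos hi]
  exact (mk_eq_mk_iff' ..).mpr ⟨c i, rfl⟩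

/-- For the Jordan block `T` of size `n` with unitary eigenvalue `λ` (`|λ| = 1`), and
`v = Σ α_j v_j` with `k` the largest (0-based) index with `α_k ≠ 0`, the normalized powers
`u m = C(m,k)⁻¹ • Tᵐ v` satisfy: the first coordinate of `u m` stays bounded away from `0`,
every other coordinate tends to `0` relative to it, and the sequence `[Tᵐ v] = [C(m,k)⁻¹ Tᵐ v]`
in projective space converges to the point `[v_1]`. -/
theorem jordan_block_projective_convergence (n : ℕ) (hn : 0 < n) (lam : ℂ)
    (hlam : ‖lam‖ = 1) (T : Matrix (Fin n) (Fin n) ℂ)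
    (hT : ∀ i j : Fin n, T i j =
      if (j : ℕ) = (i : ℕ) then lam else if (j : ℕ) = (i : ℕ) + 1 then 1 else 0)
    (v : Fin n → ℂ) (k : Fin n) (hk : v k ≠ 0) (hmax : ∀ i : Fin n, k < i → v i = 0)
    (u : ℕ → Fin n → ℂ)
    (hu : ∀ m : ℕ, u m = ((m.choose (k : ℕ) : ℂ))⁻¹ • (T ^ m).mulVec v)
    (hpow : ∀ m : ℕ, (T ^ m).mulVec v ≠ 0) :
    (∃ c : ℝ, 0 < c ∧ ∀ᶠ m in atTop, c ≤ ‖u m ⟨0, hn⟩‖) ∧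
      (∀ i : Fin n, i ≠ ⟨0, hn⟩ →
        Tendsto (fun m : ℕ => ‖u m i‖ / ‖u m ⟨0, hn⟩‖) atTop (nhds 0)) ∧
      Tendsto (fun m : ℕ => Projectivization.mk ℂ ((T ^ m).mulVec v) (hpow m)) atTop
        (nhds (Projectivization.mk ℂ (Pi.single (⟨0, hn⟩ : Fin n) (1 : ℂ))
          (fun h => (one_ne_zero : (1 : ℂ) ≠ 0) (by simpa using congrFun h ⟨0, hn⟩)))) := by
  have hlam0 : lam ≠ 0 := norm_ne_zero_iff.1 (by simp [hlam])
  obtain rfl : T = jordanBlock n lam := ext fun i j => (hT i j).trans (jordanBlock_apply ..).symm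
  have hlim : Tendsto (fun m => (lam ^ (m - (k : ℕ)))⁻¹ • u m) atTop
      (𝓝 (Pi.single ⟨0, hn⟩ (v k))) :=
    (tendsto_jordanBlock_pow_mulVec hn hlam0 hmax).congr fun m => by rw [hu, mul_inv, mul_smul]
  have hcoord (i : Fin n) :
      Tendsto (fun m => ‖u m i‖) atTop (𝓝 ‖(Pi.single ⟨0, hn⟩ (v k) : Fin n → ℂ) i‖) :=
    (tendsto_pi_nhds.1 hlim i).norm.congr fun m => by simp [norm_pow, hlam]
  have h0 : Tendsto (fun m => ‖u m ⟨0, hn⟩‖) atTop (𝓝 ‖v k‖) := by simpa using hcoord ⟨0, hn⟩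
  have hvk : 0 < ‖v k‖ := norm_pos_iff.2 hk
  refine ⟨⟨‖v k‖ / 2, by positivity, h0.eventually (le_mem_nhds (by linarith))⟩, fun i hi => ?_, ?_⟩
  · have hi0 : Tendsto (fun m => ‖u m i‖) atTop (𝓝 0) := by simpa [hi] using hcoord i
    rw [← zero_div ‖v k‖]
    exact hi0.div h0 hvk.ne'
  · have hc : ∀ᶠ m : ℕ in atTop, (lam ^ (m - (k : ℕ)) * m.choose k)⁻¹ ≠ 0 :=
      (eventually_ge_atTop (k : ℕ)).mono fun m hm => inv_ne_zero <|
        mul_ne_zero (pow_ne_zero _ hlam0) (Nat.cast_ne_zero.2 (Nat.choose_pos hm).ne')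
    convert Projectivization.tendsto_mk_of_tendsto_smul hpow hc (by simpa using hk)
      (tendsto_jordanBlock_pow_mulVec hn hlam0 hmax) using 2
    exact (Projectivization.mk_eq_mk_iff' ..).2 ⟨(v k)⁻¹, by
      rw [← Pi.single_smul', smul_eq_mul, inv_mul_cancel₀ hk]⟩
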